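/- arXiv:math/0605301 — 5 statements merged into one kernel-verified Lean document; each statement's English description precedes it below -/
import Mathlib

section
/- If R is a finite local commutative ring with unity and maximal ideal m, then the projective line over R has exactly |R| + |m| points. -/
def Admissible {R : Type*} [CommRing R] (p : R × R) : Prop :=
  ∃ M : Matrix (Fin 2) (Fin 2) R, IsUnit M ∧ M 0 0 = p.1 ∧ M 0 1 = p.2

def PairRel {R : Type*} [CommRing R] (p q : {p : R × R // Admissible p}) : Prop :=
  ∃ u : Rˣ, q.1 = ((u : R) * p.1.1, (u : R) * p.1.2)

/-- The projective line over `R`: unit-orbit classes of admissible pairs. -/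
def PL (R : Type*) [CommRing R] : Type _ := Quot (@PairRel R _)

def PL.mk {R : Type*} [CommRing R] (p : R × R) (h : Admissible p) : PL R :=
  Quot.mk _ ⟨p, h⟩

/-- `x` is a zero-divisor (counting `0` as a zero-divisor). -/
def IsZD {R : Type*} [CommRing R] (x : R) : Prop :=
  x = 0 ∨ ∃ y : R, y ≠ 0 ∧ x * y = 0

/-- A point is of type I if some representative has a unit entry. -/
def TypeI {R : Type*} [CommRing R] (X : PL R) : Prop :=
  ∃ p h, PL.mk p h = X ∧ (IsUnit p.1 ∨ IsUnit p.2)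

/-- A point is of type II if every representative has both coordinates zero-divisors. -/
def TypeII {R : Type*} [CommRing R] (X : PL R) : Prop :=
  ∀ p h, PL.mk p h = X → IsZD p.1 ∧ IsZD p.2

/-- Neighbour relation: the determinant of representatives is a non-unit. -/
def Nbr {R : Type*} [CommRing R] (X Y : PL R) : Prop :=
  ∃ p q hp hq, X = PL.mk p hp ∧ Y = PL.mk q hq ∧ ¬ IsUnit (p.1 * q.2 - p.2 * q.1)

/-- Neighbour relation phrased via zero-divisors. -/
def NbrZD {R : Type*} [CommRing R] (X Y : PL R) : Prop :=
  ∃ p q hp hq, X = PL.mk p hp ∧ Y = PL.mk q hq ∧ IsZD (p.1 * q.2 - p.2 * q.1)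

/-- Distant relation: the determinant of representatives is a unit. -/
def Distant {R : Type*} [CommRing R] (X Y : PL R) : Prop :=
  ∃ p q hp hq, X = PL.mk p hp ∧ Y = PL.mk q hq ∧ IsUnit (p.1 * q.2 - p.2 * q.1)

lemma adm {R : Type*} [CommRing R] (a b c d : R) (h : IsUnit (a * d - b * c)) :
    Admissible (a, b) :=
  ⟨!![a, b; c, d], (Matrix.isUnit_iff_isUnit_det _).2
    (by simpa [Matrix.det_fin_two_of] using h), rfl, rfl⟩

def ptU (R : Type*) [CommRing R] : PL R :=
  PL.mk (1, 0) (adm 1 0 0 1 (by simpa using isUnit_one))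

def ptV (R : Type*) [CommRing R] : PL R :=
  PL.mk (0, 1) (adm 0 1 1 0 (by simpa using (isUnit_one (M := R)).neg))

def ptW (R : Type*) [CommRing R] : PL R :=
  PL.mk (1, 1) (adm 1 1 0 1 (by simpa using isUnit_one))

abbrev R4 : Type := ZMod 4 × ZMod 4

/-
Over a local ring an admissible pair has a unit coordinate, since a determinant
`x * d - y * c` with both `x` and `y` in the maximal ideal is not a unit. Scaling by the
inverse of that unit, every point is `[1 : b]` for a unique `b ∈ R`, or else `[a : 1]` with
`a` a non-unit, i.e. `a ∈ m`, again uniquely. Hence `PL R ≃ R ⊕ m`.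
-/

namespace PL

variable {R : Type*} [CommRing R]

theorem pairRel_equivalence : Equivalence (@PairRel R _) where
  refl _ := ⟨1, by simp⟩
  symm := by
    rintro p q ⟨u, hu⟩
    exact ⟨u⁻¹, by simp [hu]⟩
  trans := by
    rintro p q r ⟨u, hu⟩ ⟨v, hv⟩
    exact ⟨v * u, by simp [hu, hv, mul_assoc]⟩

theorem mk_eq_mk_iff {p q : R × R} (hp : Admissible p) (hq : Admissible q) :
    PL.mk p hp = PL.mk q hq ↔ ∃ u : Rˣ, q = ((u : R) * p.1, (u : R) * p.2) :=
  Quot.eq.trans pairRel_equivalence.eqvGen_iff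

theorem mk_units_mul (u : Rˣ) {p : R × R} (hp : Admissible p)
    (hu : Admissible ((u : R) * p.1, (u : R) * p.2)) :
    PL.mk ((u : R) * p.1, (u : R) * p.2) hu = PL.mk p hp :=
  (mk_eq_mk_iff _ _).2 ⟨u⁻¹, by simp⟩

theorem admissible_one_left (b : R) : Admissible ((1 : R), b) :=
  adm 1 b 0 1 (by simp)

theorem admissible_one_right (a : R) : Admissible (a, (1 : R)) :=
  adm a 1 (-1) 0 (by simp)

def mkOneLeft (b : R) : PL R := PL.mk (1, b) (admissible_one_left b)

def mkOneRight (a : R) : PL R := PL.mk (a, 1) (admissible_one_right a)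

theorem mkOneLeft_injective : Function.Injective (mkOneLeft (R := R)) := by
  intro b b' h
  obtain ⟨u, hu⟩ := (mk_eq_mk_iff _ _).1 h
  simp only [Prod.mk.injEq, mul_one] at hu
  rw [hu.2, ← hu.1, one_mul]

theorem mkOneRight_injective : Function.Injective (mkOneRight (R := R)) := by
  intro a a' h
  obtain ⟨u, hu⟩ := (mk_eq_mk_iff _ _).1 h
  simp only [Prod.mk.injEq, mul_one] at hu
  rw [hu.1, ← hu.2, one_mul]

theorem mkOneLeft_ne_mkOneRight {a : R} (ha : ¬IsUnit a) (b : R) :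
    mkOneLeft b ≠ mkOneRight a := by
  intro h
  obtain ⟨u, hu⟩ := (mk_eq_mk_iff _ _).1 h
  simp only [Prod.mk.injEq, mul_one] at hu
  exact ha (hu.1 ▸ u.isUnit)

theorem exists_eq_mkOneLeft_of_isUnit {p : R × R} (hp : Admissible p) (h : IsUnit p.1) :
    ∃ u : Rˣ, PL.mk p hp = mkOneLeft (u * p.2) := by
  obtain ⟨u, hu⟩ := h
  refine ⟨u⁻¹, ?_⟩
  rw [← mk_units_mul u⁻¹ hp (by simpa [← hu] using admissible_one_left _), mkOneLeft]
  congr 1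
  simp [← hu]

theorem exists_eq_mkOneRight_of_isUnit {p : R × R} (hp : Admissible p) (h : IsUnit p.2) :
    ∃ u : Rˣ, PL.mk p hp = mkOneRight (u * p.1) := by
  obtain ⟨u, hu⟩ := h
  refine ⟨u⁻¹, ?_⟩
  rw [← mk_units_mul u⁻¹ hp (by simpa [← hu] using admissible_one_right _), mkOneRight]
  congr 1
  simp [← hu]

variable [IsLocalRing R]

theorem _root_.Admissible.isUnit_or_isUnit {p : R × R} (hp : Admissible p) :
    IsUnit p.1 ∨ IsUnit p.2 := by
  obtain ⟨M, hM, h1, h2⟩ := hp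
  have hdet : IsUnit (p.1 * M 1 1 + -(p.2 * M 1 0)) := by
    rw [← h1, ← h2, ← sub_eq_add_neg, ← Matrix.det_fin_two]
    exact (Matrix.isUnit_iff_isUnit_det M).1 hM
  exact (IsLocalRing.isUnit_or_isUnit_of_isUnit_add hdet).imp isUnit_of_mul_isUnit_left
    fun h => isUnit_of_mul_isUnit_left (by simpa using h.neg)

theorem surjective_sumElim_mkOneLeft_mkOneRight :
    Function.Surjective
      (Sum.elim mkOneLeft (mkOneRight ∘ Subtype.val) : R ⊕ IsLocalRing.maximalIdeal R → PL R) := by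
  rintro ⟨p, hp⟩
  change ∃ z, _ = PL.mk p hp
  by_cases h1 : IsUnit p.1
  · obtain ⟨u, hu⟩ := exists_eq_mkOneLeft_of_isUnit hp h1
    exact ⟨.inl _, hu.symm⟩
  · obtain ⟨u, hu⟩ := exists_eq_mkOneRight_of_isUnit hp (hp.isUnit_or_isUnit.resolve_left h1)
    have hmem : (u : R) * p.1 ∈ IsLocalRing.maximalIdeal R := by
      rwa [IsLocalRing.mem_maximalIdeal, mem_nonunits_iff, Units.isUnit_units_mul]
    exact ⟨.inr ⟨_, hmem⟩, hu.symm⟩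

theorem injective_sumElim_mkOneLeft_mkOneRight :
    Function.Injective
      (Sum.elim mkOneLeft (mkOneRight ∘ Subtype.val) : R ⊕ IsLocalRing.maximalIdeal R → PL R) :=
  mkOneLeft_injective.sumElim (mkOneRight_injective.comp Subtype.val_injective)
    fun b a => mkOneLeft_ne_mkOneRight ((IsLocalRing.mem_maximalIdeal _).1 a.2) b

noncomputable def sumEquiv : R ⊕ IsLocalRing.maximalIdeal R ≃ PL R :=
  Equiv.ofBijective _
    ⟨injective_sumElim_mkOneLeft_mkOneRight, surjective_sumElim_mkOneLeft_mkOneRight⟩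

end PL

theorem stmt5 {R : Type*} [CommRing R] [Fintype R] [IsLocalRing R] :
    Nat.card (PL R) = Fintype.card R + Nat.card (IsLocalRing.maximalIdeal R) := by
  rw [← Nat.card_congr PL.sumEquiv, Nat.card_sum, Nat.card_eq_fintype_card]
end

section
/- The projective line over Z_4 × Z_4 has exactly 8 points of type II, i.e., points all of whose representatives have both coordinates zero-divisors. -/
/-!
Units act freely on admissible pairs (these are the unimodular ones), so every point of the
projective line has exactly `|Rˣ|` representatives. Over a finite ring the zero-divisors are the
non-units, so a point is of type II iff both coordinates of one representative are non-units.
For `R = ℤ/4 × ℤ/4` admissibility can be checked componentwise over the local ring `ℤ/4`, where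
it means that one entry is a unit; this leaves 32 admissible type II pairs, and `|Rˣ| = 4`.
-/

section ProjectiveLine

variable {R : Type*} [CommRing R]

theorem admissible_iff_exists_mul_add_mul_eq_one {p : R × R} :
    Admissible p ↔ ∃ x y : R, p.1 * x + p.2 * y = 1 := by
  constructor
  · rintro ⟨M, hM, h₀₀, h₀₁⟩
    obtain ⟨u, hu⟩ := (Matrix.isUnit_iff_isUnit_det M).1 hM
    rw [Matrix.det_fin_two, h₀₀, h₀₁] at hu
    refine ⟨M 1 1 * ↑u⁻¹, -(M 1 0 * ↑u⁻¹), ?_⟩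
    linear_combination (↑u⁻¹ : R) * hu.symm + Units.inv_mul u
  · rintro ⟨x, y, h⟩
    have hdet : p.1 * x - p.2 * -y = 1 := by linear_combination h
    exact adm p.1 p.2 (-y) x (hdet ▸ isUnit_one)

theorem Admissible.units_mul {p : R × R} (h : Admissible p) (u : Rˣ) :
    Admissible (u * p.1, u * p.2) := by
  obtain ⟨x, y, hxy⟩ := admissible_iff_exists_mul_add_mul_eq_one.1 h
  refine admissible_iff_exists_mul_add_mul_eq_one.2 ⟨↑u⁻¹ * x, ↑u⁻¹ * y, ?_⟩
  linear_combination hxy + (p.1 * x + p.2 * y) * Units.mul_inv u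

theorem Admissible.units_mul_injective {p : R × R} (h : Admissible p) :
    Function.Injective fun u : Rˣ => ((u : R) * p.1, (u : R) * p.2) := by
  intro u v huv
  obtain ⟨x, y, hxy⟩ := admissible_iff_exists_mul_add_mul_eq_one.1 h
  simp only [Prod.mk.injEq] at huv
  ext
  linear_combination (↑v - ↑u) * hxy + x * huv.1 + y * huv.2

theorem pairRel_equivalence : Equivalence (@PairRel R _) where
  refl p := ⟨1, by simp⟩
  symm := by
    rintro p q ⟨u, hu⟩
    exact ⟨u⁻¹, by simp [hu]⟩
  trans := by
    rintro p q r ⟨u, hu⟩ ⟨v, hv⟩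
    exact ⟨v * u, by simp [hu, hv, mul_assoc]⟩

theorem quot_mk_pairRel_eq_iff {p q : {p : R × R // Admissible p}} :
    Quot.mk PairRel p = Quot.mk PairRel q ↔ PairRel p q :=
  ⟨fun h => pairRel_equivalence.eqvGen_iff.1 (Quot.eqvGen_exact h), Quot.sound⟩

instance : SMul Rˣ {p : R × R // Admissible p} :=
  ⟨fun u p => ⟨(u * p.1.1, u * p.1.2), p.2.units_mul u⟩⟩

theorem quot_mk_units_smul (u : Rˣ) (p : {p : R × R // Admissible p}) :
    Quot.mk PairRel (u • p) = Quot.mk PairRel p :=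
  (Quot.sound ⟨u, rfl⟩).symm

noncomputable def PL.unitsEquivFiber (X : PL R) :
    Rˣ ≃ {p : {p : R × R // Admissible p} // Quot.mk PairRel p = X} :=
  Equiv.ofBijective (fun u => ⟨u • X.out, (quot_mk_units_smul u _).trans X.out_eq⟩)
    ⟨fun _ _ h => X.out.2.units_mul_injective (congrArg (fun p => p.1.1) h), by
      rintro ⟨p, rfl⟩
      obtain ⟨u, hu⟩ := quot_mk_pairRel_eq_iff.1 (Quot.out_eq (Quot.mk PairRel p))
      exact ⟨u, Subtype.ext (Subtype.ext hu.symm)⟩⟩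

theorem PL.card_preimage_eq_card_mul_card_units (P : PL R → Prop) :
    Nat.card {p : {p : R × R // Admissible p} // P (Quot.mk PairRel p)} =
      Nat.card {X // P X} * Nat.card Rˣ := by
  rw [← Nat.card_prod]
  refine Nat.card_congr ?_
  refine (Equiv.sigmaSubtypeFiberEquiv (fun p => Quot.mk PairRel p.1) P
    fun p => p.2).symm.trans ?_
  refine (Equiv.sigmaCongrRight fun X => ?_).trans (Equiv.sigmaEquivProd _ _)
  exact (Equiv.subtypeSubtypeEquivSubtype fun h => h ▸ X.2).trans (PL.unitsEquivFiber X.1).symm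

theorem isZD_iff_not_isUnit [Finite R] [Nontrivial R] {x : R} : IsZD x ↔ ¬IsUnit x := by
  constructor
  · rintro (rfl | ⟨y, hy, hxy⟩) hx
    · exact not_isUnit_zero hx
    · exact hy (hx.mul_right_eq_zero.1 hxy)
  · intro hx
    rw [isUnit_iff_mem_nonZeroDivisors_of_finite] at hx
    obtain ⟨y, hxy, hy⟩ := notMem_nonZeroDivisors_iff_left.1 hx
    exact Or.inr ⟨y, hy, hxy⟩

theorem typeII_quot_mk_iff [Finite R] [Nontrivial R] (p : {p : R × R // Admissible p}) :
    TypeII (Quot.mk PairRel p) ↔ ¬IsUnit p.1.1 ∧ ¬IsUnit p.1.2 := by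
  simp only [TypeII, isZD_iff_not_isUnit]
  refine ⟨fun h => h p.1 p.2 rfl, fun hp q hq hqp => ?_⟩
  obtain ⟨u, hu⟩ := quot_mk_pairRel_eq_iff.1 hqp
  rw [hu] at hp
  simpa only [Units.isUnit_units_mul] using hp

theorem admissible_iff_isUnit_or_isUnit [IsLocalRing R] {p : R × R} :
    Admissible p ↔ IsUnit p.1 ∨ IsUnit p.2 := by
  rw [admissible_iff_exists_mul_add_mul_eq_one]
  constructor
  · rintro ⟨x, y, h⟩
    exact (IsLocalRing.isUnit_or_isUnit_of_add_one h).imp isUnit_of_mul_isUnit_left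
      isUnit_of_mul_isUnit_left
  · rintro (⟨u, hu⟩ | ⟨u, hu⟩)
    · exact ⟨↑u⁻¹, 0, by simp [← hu]⟩
    · exact ⟨0, ↑u⁻¹, by simp [← hu]⟩

end ProjectiveLine

theorem admissible_prod_iff {A B : Type*} [CommRing A] [CommRing B] {p : (A × B) × (A × B)} :
    Admissible p ↔ Admissible (p.1.1, p.2.1) ∧ Admissible (p.1.2, p.2.2) := by
  simp only [admissible_iff_exists_mul_add_mul_eq_one]
  constructor
  · rintro ⟨x, y, h⟩
    exact ⟨⟨x.1, y.1, congrArg Prod.fst h⟩, ⟨x.2, y.2, congrArg Prod.snd h⟩⟩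
  · rintro ⟨⟨x₁, y₁, h₁⟩, ⟨x₂, y₂, h₂⟩⟩
    exact ⟨(x₁, x₂), (y₁, y₂), Prod.ext h₁ h₂⟩

instance : IsLocalRing (ZMod 4) :=
  have : Fact (1 < 4) := ⟨by norm_num⟩
  .of_isUnit_or_isUnit_one_sub_self (by decide)

theorem card_units_R4 : Nat.card R4ˣ = 4 := by
  rw [Nat.card_congr MulEquiv.prodUnits.toEquiv, Nat.card_prod, Nat.card_eq_fintype_card,
    ZMod.card_units_eq_totient]
  rfl

theorem card_typeII_admissible_pairs_R4 :
    Nat.card {p : {p : R4 × R4 // Admissible p} // TypeII (Quot.mk PairRel p)} = 32 := by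
  rw [Nat.card_congr ((Equiv.subtypeEquivRight typeII_quot_mk_iff).trans
    (Equiv.subtypeSubtypeEquivSubtypeInter Admissible
      fun p : R4 × R4 => ¬IsUnit p.1 ∧ ¬IsUnit p.2))]
  simp only [admissible_prod_iff, admissible_iff_isUnit_or_isUnit, Prod.isUnit_iff]
  rw [Nat.card_eq_fintype_card]
  decide

theorem stmt7 : Nat.card {X : PL R4 // TypeII X} = 8 := by
  have h := PL.card_preimage_eq_card_mul_card_units (R := R4) TypeII
  rw [card_typeII_admissible_pairs_R4, card_units_R4] at h
  omega
end

section
/- On the projective line over Z_4 × Z_4, the neighbourhoods of the three pairwise distant points U = (1,0), V = (0,1), W = (1,1) have empty common intersection. -/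
/-!
Over `A × B` with `A`, `B` local, an element is a non-unit exactly when one of its two coordinates
lies in the maximal ideal. If `X = [(a, b)]` is a neighbour of `U`, `V` and `W`, then `b`, `a` and
`a - b` are non-units, so by pigeonhole two of them have a non-unit in the same coordinate. But
`(a, b)` is unimodular, so any two of `a`, `b`, `a - b` are coprime, and in a local ring two coprime
elements cannot both be non-units.
-/

theorem IsZD.not_isUnit {R : Type*} [CommRing R] [Nontrivial R] {x : R} (h : IsZD x) :
    ¬IsUnit x := by
  intro hx
  rcases h with rfl | ⟨y, hy, hxy⟩
  · exact not_isUnit_zero hx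
  · exact hy (hx.mul_right_eq_zero.mp hxy)

theorem Admissible.isCoprime {R : Type*} [CommRing R] {p : R × R} (h : Admissible p) :
    IsCoprime p.1 p.2 := by
  obtain ⟨M, hM, h0, h1⟩ := h
  obtain ⟨u, hu⟩ := (Matrix.isUnit_iff_isUnit_det M).mp hM
  rw [Matrix.det_fin_two, h0, h1] at hu
  exact ⟨M 1 1 * ↑u⁻¹, -M 1 0 * ↑u⁻¹, by linear_combination (↑u⁻¹ : R) * hu.symm + u.inv_mul⟩

namespace PL

variable {R : Type*} [CommRing R]

theorem exists_unit_of_mk_eq_mk {p q : R × R} {hp : Admissible p} {hq : Admissible q}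
    (h : mk p hp = mk q hq) : ∃ u : Rˣ, q = ((u : R) * p.1, (u : R) * p.2) :=
  pairRel_equivalence.eqvGen_iff.mp (Quot.eqvGen_exact h)

theorem not_isUnit_det_of_nbrZD [Nontrivial R] {p q : R × R} {hp : Admissible p}
    {hq : Admissible q} (h : NbrZD (mk p hp) (mk q hq)) :
    ¬IsUnit (p.1 * q.2 - p.2 * q.1) := by
  obtain ⟨p', q', hp', hq', hpp', hqq', hzd⟩ := h
  obtain ⟨u, rfl⟩ := exists_unit_of_mk_eq_mk hpp'
  obtain ⟨v, rfl⟩ := exists_unit_of_mk_eq_mk hqq'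
  rw [← Units.isUnit_units_mul (u * v)]
  convert hzd.not_isUnit using 2
  simp only [Units.val_mul]
  ring

end PL

theorem IsCoprime.isUnit_or_isUnit {A : Type*} [CommRing A] [IsLocalRing A] {x y : A}
    (h : IsCoprime x y) : IsUnit x ∨ IsUnit y := by
  obtain ⟨u, v, huv⟩ := h
  exact (IsLocalRing.isUnit_or_isUnit_of_add_one huv).imp isUnit_of_mul_isUnit_right
    isUnit_of_mul_isUnit_right

theorem IsCoprime.isUnit_sub_or_isUnit {A : Type*} [CommRing A] [IsLocalRing A] {x y : A}
    (h : IsCoprime x y) : IsUnit (x - y) ∨ IsUnit y := by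
  have : IsCoprime (x - y * 1) y := IsCoprime.sub_mul_left_left_iff.mpr h
  simpa only [mul_one] using this.isUnit_or_isUnit

theorem Prod.isUnit_or_isUnit_or_isUnit_sub_of_isCoprime {A B : Type*} [CommRing A]
    [IsLocalRing A] [CommRing B] [IsLocalRing B] {a b : A × B} (h : IsCoprime a b) :
    IsUnit a ∨ IsUnit b ∨ IsUnit (a - b) := by
  have h₁ : IsCoprime a.1 b.1 := h.map (RingHom.fst A B)
  have h₂ : IsCoprime a.2 b.2 := h.map (RingHom.snd A B)
  have := h₁.isUnit_or_isUnit
  have := h₁.isUnit_sub_or_isUnit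
  have := h₁.symm.isUnit_sub_or_isUnit
  have := h₂.isUnit_or_isUnit
  have := h₂.isUnit_sub_or_isUnit
  have := h₂.symm.isUnit_sub_or_isUnit
  simp only [Prod.isUnit_iff, Prod.fst_sub, Prod.snd_sub, IsUnit.sub_iff (x := b.1),
    IsUnit.sub_iff (x := b.2)] at *
  tauto

theorem PL.not_nbrZD_ptU_ptV_ptW {A B : Type*} [CommRing A] [IsLocalRing A] [CommRing B]
    [IsLocalRing B] (X : PL (A × B)) :
    ¬(NbrZD X (ptU (A × B)) ∧ NbrZD X (ptV (A × B)) ∧ NbrZD X (ptW (A × B))) := by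
  rintro ⟨hU, hV, hW⟩
  obtain ⟨⟨p, hp⟩, rfl⟩ := Quot.exists_rep X
  have hb : ¬IsUnit p.2 := by simpa using not_isUnit_det_of_nbrZD hU
  have ha : ¬IsUnit p.1 := by simpa using not_isUnit_det_of_nbrZD hV
  have hab : ¬IsUnit (p.1 - p.2) := by simpa using not_isUnit_det_of_nbrZD hW
  rcases Prod.isUnit_or_isUnit_or_isUnit_sub_of_isCoprime hp.isCoprime with h | h | h
  exacts [ha h, hb h, hab h]

instance inst_s10 : IsLocalRing (ZMod 4) :=
  have : Fact (1 < 4) := ⟨by norm_num⟩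
  .of_isUnit_or_isUnit_of_isUnit_add (by decide)

theorem stmt10 (X : PL R4) :
    ¬ (NbrZD X (ptU R4) ∧ X ≠ ptU R4 ∧ NbrZD X (ptV R4) ∧ X ≠ ptV R4 ∧
       NbrZD X (ptW R4) ∧ X ≠ ptW R4) :=
  fun ⟨hU, _, hV, _, hW, _⟩ => PL.not_nbrZD_ptU_ptV_ptW X ⟨hU, hV, hW⟩
end

section
/- On the projective line over Z_4 × Z_4, the maximum number of pairwise distant points is 3. -/
/-- Reduction mod 2 on the first factor. -/
def fR : R4 →+* ZMod 2 :=
  (ZMod.castHom (show 2 ∣ 4 by norm_num) (ZMod 2)).comp (RingHom.fst (ZMod 4) (ZMod 4))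

lemma zmod2_unit_eq_one : ∀ x : ZMod 2, IsUnit x → x = 1 := by decide

lemma fR_unit {u : R4ˣ} : fR (u : R4) = 1 :=
  zmod2_unit_eq_one _ ((u : R4ˣ).isUnit.map fR)

/-- The reduction map on the projective line. -/
def gR : PL R4 → ZMod 2 × ZMod 2 :=
  Quot.lift (fun p => (fR p.1.1, fR p.1.2)) (by
    rintro ⟨p, hp⟩ ⟨q, hq⟩ ⟨u, h⟩
    rw [Prod.ext_iff] at h
    simp only [] at h
    simp [h.1, h.2, fR_unit])

lemma gR_mk (p : R4 × R4) (h : Admissible p) :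
    gR (PL.mk p h) = (fR p.1, fR p.2) := rfl

lemma gdet_of_distant {X Y : PL R4} (h : Distant X Y) :
    (gR X).1 * (gR Y).2 - (gR X).2 * (gR Y).1 = 1 := by
  obtain ⟨p, q, hp, hq, hX, hY, hu⟩ := h
  subst hX; subst hY
  rw [gR_mk, gR_mk]
  have : IsUnit (fR (p.1 * q.2 - p.2 * q.1)) := hu.map fR
  have h1 : fR (p.1 * q.2 - p.2 * q.1) = 1 := zmod2_unit_eq_one _ this
  simpa [map_sub, map_mul] using h1

lemma distant_UV : Distant (ptU R4) (ptV R4) :=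
  ⟨(1, 0), (0, 1), adm 1 0 0 1 (by simpa using isUnit_one),
    adm 0 1 1 0 (by simpa using (isUnit_one (M := R4)).neg), rfl, rfl,
    by norm_num⟩

lemma distant_UW : Distant (ptU R4) (ptW R4) :=
  ⟨(1, 0), (1, 1), adm 1 0 0 1 (by simpa using isUnit_one),
    adm 1 1 0 1 (by simpa using isUnit_one), rfl, rfl, by norm_num⟩

lemma distant_VW : Distant (ptV R4) (ptW R4) :=
  ⟨(0, 1), (1, 1), adm 0 1 1 0 (by simpa using (isUnit_one (M := R4)).neg),
    adm 1 1 0 1 (by simpa using isUnit_one), rfl, rfl,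
    by simpa using (isUnit_one (M := R4)).neg⟩

lemma distant_symm {X Y : PL R4} (h : Distant X Y) : Distant Y X := by
  obtain ⟨p, q, hp, hq, hX, hY, hu⟩ := h
  refine ⟨q, p, hq, hp, hY, hX, ?_⟩
  have : q.1 * p.2 - q.2 * p.1 = -(p.1 * q.2 - p.2 * q.1) := by ring
  rw [this]
  exact hu.neg

noncomputable instance : DecidableEq (PL R4) := Classical.decEq _

theorem stmt11 :
    (∃ S : Finset (PL R4), S.card = 3 ∧ (S : Set (PL R4)).Pairwise Distant) ∧
    (∀ S : Finset (PL R4), (S : Set (PL R4)).Pairwise Distant → S.card ≤ 3) := by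
  constructor
  · refine ⟨{ptU R4, ptV R4, ptW R4}, ?_, ?_⟩
    · have hUV : ptU R4 ≠ ptV R4 := fun h => by
        have := congrArg gR h
        rw [show ptU R4 = PL.mk (1,0) (adm 1 0 0 1 (by simpa using isUnit_one)) from rfl,
          show ptV R4 = PL.mk (0,1) (adm 0 1 1 0 (by simpa using (isUnit_one (M := R4)).neg)) from rfl,
          gR_mk, gR_mk] at this
        simp at this
      have hUW : ptU R4 ≠ ptW R4 := fun h => by
        have := congrArg gR h
        rw [show ptU R4 = PL.mk (1,0) (adm 1 0 0 1 (by simpa using isUnit_one)) from rfl,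
          show ptW R4 = PL.mk (1,1) (adm 1 1 0 1 (by simpa using isUnit_one)) from rfl,
          gR_mk, gR_mk] at this
        simp at this
      have hVW : ptV R4 ≠ ptW R4 := fun h => by
        have := congrArg gR h
        rw [show ptV R4 = PL.mk (0,1) (adm 0 1 1 0 (by simpa using (isUnit_one (M := R4)).neg)) from rfl,
          show ptW R4 = PL.mk (1,1) (adm 1 1 0 1 (by simpa using isUnit_one)) from rfl,
          gR_mk, gR_mk] at this
        simp at this
      rw [Finset.card_insert_of_notMem (by simp [hUV, hUW]),
        Finset.card_insert_of_notMem (by simp [hVW])]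
      rfl
    · intro x hx y hy hxy
      simp only [Finset.coe_insert, Finset.coe_singleton, Set.mem_insert_iff,
        Set.mem_singleton_iff] at hx hy
      rcases hx with rfl | rfl | rfl <;> rcases hy with rfl | rfl | rfl <;>
        first
        | exact absurd rfl hxy
        | exact distant_UV
        | exact distant_UW
        | exact distant_VW
        | exact distant_symm distant_UV
        | exact distant_symm distant_UW
        | exact distant_symm distant_VW
  · intro S hS
    by_contra h
    push_neg at h
    have h2 : 1 < S.card := by omega
    have hinj : Set.InjOn gR S := by
      intro x hx y hy hxy
      by_contra hne
      have hd := hS hx hy hne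
      have := gdet_of_distant hd
      rw [hxy] at this
      simp [mul_comm] at this
    have himg : S.image gR ⊆ ({(1, 0), (0, 1), (1, 1)} : Finset (ZMod 2 × ZMod 2)) := by
      intro v hv
      obtain ⟨x, hx, rfl⟩ := Finset.mem_image.mp hv
      obtain ⟨y, hy, hne⟩ := Finset.exists_mem_ne h2 x
      have := gdet_of_distant (hS hx hy (Ne.symm hne))
      revert this
      generalize gR x = a
      generalize gR y = b
      revert a b
      decide
    have := Finset.card_le_card himg
    rw [Finset.card_image_of_injOn hinj] at this
    have h3 : ({(1, 0), (0, 1), (1, 1)} : Finset (ZMod 2 × ZMod 2)).card ≤ 3 :=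
      by decide
    omega
end

section
/- If R is a finite local commutative ring with unity, then the neighbour relation on the projective line over R is transitive, hence an equivalence relation. -/
/-- Neighbour relation via the maximal ideal of a local ring. -/
def NbrM {R : Type*} [CommRing R] [IsLocalRing R] (X Y : PL R) : Prop :=
  ∃ p q hp hq, X = PL.mk p hp ∧ Y = PL.mk q hq ∧
    (p.1 * q.2 - p.2 * q.1) ∈ IsLocalRing.maximalIdeal R


lemma unit_mul_mem {R : Type*} [CommRing R] (I : Ideal R) (u : Rˣ) (x : R) :
    (u : R) * x ∈ I ↔ x ∈ I := by
  constructor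
  · intro h
    have := I.mul_mem_left (↑u⁻¹ : R) h
    simpa [← mul_assoc] using this
  · exact I.mul_mem_left _

lemma adm_unit {R : Type*} [CommRing R] [IsLocalRing R] {p : R × R}
    (h : Admissible p) : IsUnit p.1 ∨ IsUnit p.2 := by
  obtain ⟨M, hM, h1, h2⟩ := h
  rw [Matrix.isUnit_iff_isUnit_det, Matrix.det_fin_two, h1, h2] at hM
  by_contra hc
  push_neg at hc
  have m1 : p.1 ∈ IsLocalRing.maximalIdeal R := by
    simpa [IsLocalRing.mem_maximalIdeal, mem_nonunits_iff] using hc.1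
  have m2 : p.2 ∈ IsLocalRing.maximalIdeal R := by
    simpa [IsLocalRing.mem_maximalIdeal, mem_nonunits_iff] using hc.2
  have : p.1 * M 1 1 - p.2 * M 1 0 ∈ IsLocalRing.maximalIdeal R :=
    Ideal.sub_mem _ (Ideal.mul_mem_right _ _ m1) (Ideal.mul_mem_right _ _ m2)
  exact ((IsLocalRing.mem_maximalIdeal _).mp this) hM

lemma det_mem_congr {R : Type*} [CommRing R] [IsLocalRing R] (p : R × R)
    {q q' : R × R} (hq : Admissible q) (hq' : Admissible q')
    (h : PL.mk q hq = PL.mk q' hq') :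
    (p.1 * q.2 - p.2 * q.1 ∈ IsLocalRing.maximalIdeal R) ↔
      (p.1 * q'.2 - p.2 * q'.1 ∈ IsLocalRing.maximalIdeal R) := by
  have hE : Relation.EqvGen PairRel (⟨q, hq⟩ : {p : R × R // Admissible p}) ⟨q', hq'⟩ :=
    Quot.eqvGen_exact h
  have gen : ∀ a b : {p : R × R // Admissible p}, Relation.EqvGen PairRel a b →
      ((p.1 * a.1.2 - p.2 * a.1.1 ∈ IsLocalRing.maximalIdeal R) ↔
       (p.1 * b.1.2 - p.2 * b.1.1 ∈ IsLocalRing.maximalIdeal R)) := by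
    intro a b hab
    induction hab with
    | rel a b hab =>
      obtain ⟨u, hu⟩ := hab
      rw [hu]
      have : p.1 * ((u : R) * a.1.2) - p.2 * ((u : R) * a.1.1)
          = (u : R) * (p.1 * a.1.2 - p.2 * a.1.1) := by ring
      rw [this, unit_mul_mem]
    | refl a => rfl
    | symm a b _ ih => exact ih.symm
    | trans a b c _ _ ih1 ih2 => exact ih1.trans ih2
  exact gen _ _ hE

theorem stmt14 {R : Type*} [CommRing R] [Fintype R] [IsLocalRing R] :
    Transitive (@NbrM R _ _) ∧ Equivalence (@NbrM R _ _) := by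
  have htrans : Transitive (@NbrM R _ _) := by
    intro X Y Z hXY hYZ
    obtain ⟨p, q, hp, hq, hX, hY, hpq⟩ := hXY
    obtain ⟨q', r, hq', hr, hY', hZ, hqr⟩ := hYZ
    refine ⟨p, r, hp, hr, hX, hZ, ?_⟩
    have hEq : PL.mk q' hq' = PL.mk q hq := hY'.symm.trans hY
    have h2 : r.1 * q'.2 - r.2 * q'.1 ∈ IsLocalRing.maximalIdeal R := by
      have := neg_mem hqr
      have e : -(q'.1 * r.2 - q'.2 * r.1) = r.1 * q'.2 - r.2 * q'.1 := by ring
      rwa [e] at this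
    have h2' : r.1 * q.2 - r.2 * q.1 ∈ IsLocalRing.maximalIdeal R :=
      (det_mem_congr r hq' hq hEq).mp h2
    have hqr' : q.1 * r.2 - q.2 * r.1 ∈ IsLocalRing.maximalIdeal R := by
      have := neg_mem h2'
      have e : -(r.1 * q.2 - r.2 * q.1) = q.1 * r.2 - q.2 * r.1 := by ring
      rwa [e] at this
    rcases adm_unit hq with ⟨u, hu⟩ | ⟨u, hu⟩
    · have key : (q.1) * (p.1 * r.2 - p.2 * r.1) =
          p.1 * (q.1 * r.2 - q.2 * r.1) + r.1 * (p.1 * q.2 - p.2 * q.1) := by ring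
      have hmem : q.1 * (p.1 * r.2 - p.2 * r.1) ∈ IsLocalRing.maximalIdeal R := by
        rw [key]
        exact Ideal.add_mem _ (Ideal.mul_mem_left _ _ hqr') (Ideal.mul_mem_left _ _ hpq)
      rw [← hu] at hmem
      exact (unit_mul_mem _ u _).mp hmem
    · have key : (q.2) * (p.1 * r.2 - p.2 * r.1) =
          r.2 * (p.1 * q.2 - p.2 * q.1) + p.2 * (q.1 * r.2 - q.2 * r.1) := by ring
      have hmem : q.2 * (p.1 * r.2 - p.2 * r.1) ∈ IsLocalRing.maximalIdeal R := by
        rw [key]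
        exact Ideal.add_mem _ (Ideal.mul_mem_left _ _ hpq) (Ideal.mul_mem_left _ _ hqr')
      rw [← hu] at hmem
      exact (unit_mul_mem _ u _).mp hmem
  refine ⟨htrans, ?_, ?_, fun h1 h2 => htrans h1 h2⟩
  · intro X
    induction X using Quot.ind with
    | mk a =>
      refine ⟨a.1, a.1, a.2, a.2, rfl, rfl, ?_⟩
      have : a.1.1 * a.1.2 - a.1.2 * a.1.1 = 0 := by ring
      rw [this]
      exact Ideal.zero_mem _
  · intro X Y ⟨p, q, hp, hq, hX, hY, hpq⟩
    refine ⟨q, p, hq, hp, hY, hX, ?_⟩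
    have := neg_mem hpq
    have e : -(p.1 * q.2 - p.2 * q.1) = q.1 * p.2 - q.2 * p.1 := by ring
    rwa [e] at this
end
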